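/- arXiv:nlin/0703062 — 2 statements merged into one kernel-verified Lean document; each statement's English description precedes it below -/
import Mathlib

section
/- Let a, b ∈ R^3 be fixed vectors and α, β ∈ R. The bracket on R^6 defined by the bivector P_1^{(1)} with blocks: upper-left 2α⟨a,s⟩ s_M, lower-right 2α⟨b,t⟩ t_M, and upper-right block β (a×s) ⊗ (b×t) (lower-left its negative transpose), satisfies the Jacobi identity and hence is a Poisson bracket. -/
noncomputable section

/-- Phase space `ℝ^6`. -/
abbrev V6 : Type := Fin 6 → ℝ

/-- Partial derivative `∂ᵢ f` at `z`. -/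
def pd (i : Fin 6) (f : V6 → ℝ) (z : V6) : ℝ := fderiv ℝ f z (Pi.single i 1)

/-- The antisymmetric matrix `v_M` with `v_M w = v × w`. -/
def cm (v : Fin 3 → ℝ) : Matrix (Fin 3) (Fin 3) ℝ :=
  !![0, v 2, -v 1; -v 2, 0, v 0; v 1, -v 0, 0]

/-- Euclidean inner product. -/
def dot (u v : Fin 3 → ℝ) : ℝ := ∑ i, u i * v i

/-- Cross product. -/
def cross (u v : Fin 3 → ℝ) : Fin 3 → ℝ :=
  ![u 1 * v 2 - u 2 * v 1, u 2 * v 0 - u 0 * v 2, u 0 * v 1 - u 1 * v 0]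

/-- Outer product `(x ⊗ y)_{ij} = xᵢ yⱼ`. -/
def outer (u v : Fin 3 → ℝ) : Matrix (Fin 3) (Fin 3) ℝ := Matrix.of fun i j => u i * v j

def sv (z : V6) (i : Fin 3) : ℝ := z (Fin.castAdd 3 i)
def tv (z : V6) (i : Fin 3) : ℝ := z (Fin.natAdd 3 i)

/-- Build a 6×6 matrix from four 3×3 blocks. -/
def bb (A B C D : Matrix (Fin 3) (Fin 3) ℝ) : Matrix (Fin 6) (Fin 6) ℝ :=
  (Matrix.fromBlocks A B C D).submatrix
    (finSumFinEquiv (m := 3) (n := 3)).symm (finSumFinEquiv (m := 3) (n := 3)).symm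

/-- The canonical Lie–Poisson bivector of `so(3) ⊕ so(3)`. -/
def P0 (z : V6) : Matrix (Fin 6) (Fin 6) ℝ := bb (cm (sv z)) 0 0 (cm (tv z))

/-- The bracket `{f,g} = Σ P^{ij} ∂ᵢf ∂ⱼg` associated with a bivector `P`. -/
def pb (P : V6 → Matrix (Fin 6) (Fin 6) ℝ) (f g : V6 → ℝ) (z : V6) : ℝ :=
  ∑ i, ∑ j, P z i j * pd i f z * pd j g z

/-- The quadratic bivector `P₁⁽¹⁾`. -/
def P11 (a b : Fin 3 → ℝ) (α β : ℝ) (z : V6) : Matrix (Fin 6) (Fin 6) ℝ :=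
  bb ((2 * α * dot a (sv z)) • cm (sv z))
     (β • outer (cross a (sv z)) (cross b (tv z)))
     (-((β • outer (cross a (sv z)) (cross b (tv z))).transpose))
     ((2 * α * dot b (tv z)) • cm (tv z))


-- auxiliary
def eps (i j k : Fin 3) : ℝ :=
  ((((j : ℤ) - (i : ℤ)) * ((k : ℤ) - (j : ℤ)) * ((k : ℤ) - (i : ℤ))) / 2 : ℤ)
def Ac (a : Fin 3 → ℝ) (i m : Fin 3) : ℝ := ∑ p, eps i p m * a p
def Qs (a b : Fin 3 → ℝ) (α β : ℝ) :
    Fin 3 ⊕ Fin 3 → Fin 3 ⊕ Fin 3 → Fin 3 ⊕ Fin 3 → Fin 3 ⊕ Fin 3 → ℝ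
  | .inl i, .inl j, .inl m, .inl n => 2*α * a m * eps i j n
  | .inl i, .inr j, .inl m, .inr n => β * Ac a i m * Ac b j n
  | .inr i, .inl j, .inl m, .inr n => -(β * Ac a j m * Ac b i n)
  | .inr i, .inr j, .inr m, .inr n => 2*α * b m * eps i j n
  | _, _, _, _ => 0
def Qc (a b : Fin 3 → ℝ) (α β : ℝ) (i j m n : Fin 6) : ℝ :=
  Qs a b α β (finSumFinEquiv.symm i) (finSumFinEquiv.symm j)
    (finSumFinEquiv.symm m) (finSumFinEquiv.symm n)

@[simp] lemma es0 : (finSumFinEquiv (m := 3) (n := 3)).symm 0 = Sum.inl 0 := rfl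
@[simp] lemma es1 : (finSumFinEquiv (m := 3) (n := 3)).symm 1 = Sum.inl 1 := rfl
@[simp] lemma es2 : (finSumFinEquiv (m := 3) (n := 3)).symm 2 = Sum.inl 2 := rfl
@[simp] lemma es3 : (finSumFinEquiv (m := 3) (n := 3)).symm 3 = Sum.inr 0 := rfl
@[simp] lemma es4 : (finSumFinEquiv (m := 3) (n := 3)).symm 4 = Sum.inr 1 := rfl
@[simp] lemma es5 : (finSumFinEquiv (m := 3) (n := 3)).symm 5 = Sum.inr 2 := rfl
@[simp] lemma ca0 : (Fin.castAdd 3 (0 : Fin 3)) = (0 : Fin 6) := rfl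
@[simp] lemma ca1 : (Fin.castAdd 3 (1 : Fin 3)) = (1 : Fin 6) := rfl
@[simp] lemma ca2 : (Fin.castAdd 3 (2 : Fin 3)) = (2 : Fin 6) := rfl
@[simp] lemma na0 : (Fin.natAdd 3 (0 : Fin 3)) = (3 : Fin 6) := rfl
@[simp] lemma na1 : (Fin.natAdd 3 (1 : Fin 3)) = (4 : Fin 6) := rfl
@[simp] lemma na2 : (Fin.natAdd 3 (2 : Fin 3)) = (5 : Fin 6) := rfl
@[simp] lemma an0 : (Fin.addNat (0 : Fin 3) 3) = (3 : Fin 6) := rfl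
@[simp] lemma an1 : (Fin.addNat (1 : Fin 3) 3) = (4 : Fin 6) := rfl
@[simp] lemma an2 : (Fin.addNat (2 : Fin 3) 3) = (5 : Fin 6) := rfl
@[simp] lemma eps000 : eps 0 0 0 = 0 := by norm_num [eps]
@[simp] lemma eps001 : eps 0 0 1 = 0 := by norm_num [eps]
@[simp] lemma eps002 : eps 0 0 2 = 0 := by norm_num [eps]
@[simp] lemma eps010 : eps 0 1 0 = 0 := by norm_num [eps]
@[simp] lemma eps011 : eps 0 1 1 = 0 := by norm_num [eps]
@[simp] lemma eps012 : eps 0 1 2 = 1 := by norm_num [eps]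
@[simp] lemma eps020 : eps 0 2 0 = 0 := by norm_num [eps]
@[simp] lemma eps021 : eps 0 2 1 = -1 := by norm_num [eps]
@[simp] lemma eps022 : eps 0 2 2 = 0 := by norm_num [eps]
@[simp] lemma eps100 : eps 1 0 0 = 0 := by norm_num [eps]
@[simp] lemma eps101 : eps 1 0 1 = 0 := by norm_num [eps]
@[simp] lemma eps102 : eps 1 0 2 = -1 := by norm_num [eps]
@[simp] lemma eps110 : eps 1 1 0 = 0 := by norm_num [eps]
@[simp] lemma eps111 : eps 1 1 1 = 0 := by norm_num [eps]
@[simp] lemma eps112 : eps 1 1 2 = 0 := by norm_num [eps]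
@[simp] lemma eps120 : eps 1 2 0 = 1 := by norm_num [eps]
@[simp] lemma eps121 : eps 1 2 1 = 0 := by norm_num [eps]
@[simp] lemma eps122 : eps 1 2 2 = 0 := by norm_num [eps]
@[simp] lemma eps200 : eps 2 0 0 = 0 := by norm_num [eps]
@[simp] lemma eps201 : eps 2 0 1 = 1 := by norm_num [eps]
@[simp] lemma eps202 : eps 2 0 2 = 0 := by norm_num [eps]
@[simp] lemma eps210 : eps 2 1 0 = -1 := by norm_num [eps]
@[simp] lemma eps211 : eps 2 1 1 = 0 := by norm_num [eps]
@[simp] lemma eps212 : eps 2 1 2 = 0 := by norm_num [eps]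
@[simp] lemma eps220 : eps 2 2 0 = 0 := by norm_num [eps]
@[simp] lemma eps221 : eps 2 2 1 = 0 := by norm_num [eps]
@[simp] lemma eps222 : eps 2 2 2 = 0 := by norm_num [eps]

example (a b : Fin 3 → ℝ) (α β : ℝ) (z : V6) :
    P11 a b α β z 0 4 = ∑ m, ∑ n, Qc a b α β 0 4 m n * z m * z n := by
  simp [P11, bb, Qc, Qs, Fin.sum_univ_six, Ac, Fin.sum_univ_three, cross, dot, sv, tv,
    Matrix.fromBlocks, outer, cm]
  ring
example (a b : Fin 3 → ℝ) (α β : ℝ) (z : V6) :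
    P11 a b α β z 2 2 = ∑ m, ∑ n, Qc a b α β 2 2 m n * z m * z n := by
  simp [P11, bb, Qc, Qs, Fin.sum_univ_six, Ac, Fin.sum_univ_three, cross, dot, sv, tv,
    Matrix.fromBlocks, outer, cm]
example (a b : Fin 3 → ℝ) (α β : ℝ) (z : V6) :
    P11 a b α β z 3 2 = ∑ m, ∑ n, Qc a b α β 3 2 m n * z m * z n := by
  simp [P11, bb, Qc, Qs, Fin.sum_univ_six, Ac, Fin.sum_univ_three, cross, dot, sv, tv,
    Matrix.fromBlocks, outer, cm]
  ring

set_option maxHeartbeats 2000000 in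
lemma P11_eq (a b : Fin 3 → ℝ) (α β : ℝ) (z : V6) (i j : Fin 6) :
    P11 a b α β z i j = ∑ m, ∑ n, Qc a b α β i j m n * z m * z n := by
  fin_cases i <;> fin_cases j <;>
  · simp [P11, bb, Qc, Qs, Fin.sum_univ_six, Ac, Fin.sum_univ_three, cross, dot, sv, tv,
      Matrix.fromBlocks, outer, cm]
    try ring


def Pq (a b : Fin 3 → ℝ) (α β : ℝ) (z : V6) (i j : Fin 6) : ℝ :=
  ∑ m, ∑ n, Qc a b α β i j m n * z m * z n
def Dq (a b : Fin 3 → ℝ) (α β : ℝ) (z : V6) (l i j : Fin 6) : ℝ :=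
  ∑ n, (Qc a b α β i j l n + Qc a b α β i j n l) * z n
def Sq (a b : Fin 3 → ℝ) (α β : ℝ) (z : V6) (i j k : Fin 6) : ℝ :=
  ∑ l, (Pq a b α β z i l * Dq a b α β z l j k + Pq a b α β z j l * Dq a b α β z l k i
    + Pq a b α β z k l * Dq a b α β z l i j)

lemma eps_swap (i j k : Fin 3) : eps i j k = - eps j i k := by
  have h : ∀ i j k : Fin 3,
      ((((j : ℤ) - (i : ℤ)) * ((k : ℤ) - (j : ℤ)) * ((k : ℤ) - (i : ℤ))) / 2 : ℤ)
      = -((((i : ℤ) - (j : ℤ)) * ((k : ℤ) - (i : ℤ)) * ((k : ℤ) - (j : ℤ))) / 2 : ℤ) := by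
    decide
  unfold eps
  rw [← Int.cast_neg, h i j k]

lemma Qs_anti (a b : Fin 3 → ℝ) (α β : ℝ) (i j m n : Fin 3 ⊕ Fin 3) :
    Qs a b α β i j m n = - Qs a b α β j i m n := by
  rcases i with i|i <;> rcases j with j|j <;> rcases m with m|m <;> rcases n with n|n <;>
    simp only [Qs, neg_neg, neg_zero] <;> (try rw [eps_swap]) <;> ring

lemma Qc_anti (a b : Fin 3 → ℝ) (α β : ℝ) (i j m n : Fin 6) :
    Qc a b α β i j m n = - Qc a b α β j i m n := Qs_anti a b α β _ _ _ _

lemma Pq_anti (a b : Fin 3 → ℝ) (α β : ℝ) (z : V6) (i j : Fin 6) :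
    Pq a b α β z i j = - Pq a b α β z j i := by
  rw [eq_neg_iff_add_eq_zero, Pq, Pq, ← Finset.sum_add_distrib]
  refine Finset.sum_eq_zero fun m _ => ?_
  rw [← Finset.sum_add_distrib]
  refine Finset.sum_eq_zero fun n _ => ?_
  linear_combination (z m * z n) * Qc_anti a b α β i j m n

lemma Dq_anti (a b : Fin 3 → ℝ) (α β : ℝ) (z : V6) (l i j : Fin 6) :
    Dq a b α β z l i j = - Dq a b α β z l j i := by
  rw [eq_neg_iff_add_eq_zero, Dq, Dq, ← Finset.sum_add_distrib]
  refine Finset.sum_eq_zero fun n _ => ?_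
  linear_combination (z n) * Qc_anti a b α β i j l n + (z n) * Qc_anti a b α β i j n l

lemma Sq_cyc (a b : Fin 3 → ℝ) (α β : ℝ) (z : V6) (i j k : Fin 6) :
    Sq a b α β z i j k = Sq a b α β z j k i := by
  refine Finset.sum_congr rfl fun l _ => ?_
  ring

lemma Sq_swap (a b : Fin 3 → ℝ) (α β : ℝ) (z : V6) (i j k : Fin 6) :
    Sq a b α β z i j k = - Sq a b α β z j i k := by
  rw [eq_neg_iff_add_eq_zero, Sq, Sq, ← Finset.sum_add_distrib]
  refine Finset.sum_eq_zero fun l _ => ?_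
  linear_combination Pq a b α β z i l * Dq_anti a b α β z l j k
    + Pq a b α β z j l * Dq_anti a b α β z l k i
    + Pq a b α β z k l * Dq_anti a b α β z l i j


set_option maxHeartbeats 4000000 in
lemma SqB012 (a b : Fin 3 → ℝ) (α β : ℝ) (z : V6) : Sq a b α β z 0 1 2 = 0 := by
  simp only [Sq, Pq, Dq, Fin.sum_univ_six]
  simp [Qc, Qs, Ac, Fin.sum_univ_three]
  ring

set_option maxHeartbeats 4000000 in
lemma SqB013 (a b : Fin 3 → ℝ) (α β : ℝ) (z : V6) : Sq a b α β z 0 1 3 = 0 := by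
  simp only [Sq, Pq, Dq, Fin.sum_univ_six]
  simp [Qc, Qs, Ac, Fin.sum_univ_three]
  ring

set_option maxHeartbeats 4000000 in
lemma SqB014 (a b : Fin 3 → ℝ) (α β : ℝ) (z : V6) : Sq a b α β z 0 1 4 = 0 := by
  simp only [Sq, Pq, Dq, Fin.sum_univ_six]
  simp [Qc, Qs, Ac, Fin.sum_univ_three]
  ring

set_option maxHeartbeats 4000000 in
lemma SqB015 (a b : Fin 3 → ℝ) (α β : ℝ) (z : V6) : Sq a b α β z 0 1 5 = 0 := by
  simp only [Sq, Pq, Dq, Fin.sum_univ_six]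
  simp [Qc, Qs, Ac, Fin.sum_univ_three]
  ring

set_option maxHeartbeats 4000000 in
lemma SqB023 (a b : Fin 3 → ℝ) (α β : ℝ) (z : V6) : Sq a b α β z 0 2 3 = 0 := by
  simp only [Sq, Pq, Dq, Fin.sum_univ_six]
  simp [Qc, Qs, Ac, Fin.sum_univ_three]
  ring

set_option maxHeartbeats 4000000 in
lemma SqB024 (a b : Fin 3 → ℝ) (α β : ℝ) (z : V6) : Sq a b α β z 0 2 4 = 0 := by
  simp only [Sq, Pq, Dq, Fin.sum_univ_six]
  simp [Qc, Qs, Ac, Fin.sum_univ_three]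
  ring

set_option maxHeartbeats 4000000 in
lemma SqB025 (a b : Fin 3 → ℝ) (α β : ℝ) (z : V6) : Sq a b α β z 0 2 5 = 0 := by
  simp only [Sq, Pq, Dq, Fin.sum_univ_six]
  simp [Qc, Qs, Ac, Fin.sum_univ_three]
  ring

set_option maxHeartbeats 4000000 in
lemma SqB034 (a b : Fin 3 → ℝ) (α β : ℝ) (z : V6) : Sq a b α β z 0 3 4 = 0 := by
  simp only [Sq, Pq, Dq, Fin.sum_univ_six]
  simp [Qc, Qs, Ac, Fin.sum_univ_three]
  ring

set_option maxHeartbeats 4000000 in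
lemma SqB035 (a b : Fin 3 → ℝ) (α β : ℝ) (z : V6) : Sq a b α β z 0 3 5 = 0 := by
  simp only [Sq, Pq, Dq, Fin.sum_univ_six]
  simp [Qc, Qs, Ac, Fin.sum_univ_three]
  ring

set_option maxHeartbeats 4000000 in
lemma SqB045 (a b : Fin 3 → ℝ) (α β : ℝ) (z : V6) : Sq a b α β z 0 4 5 = 0 := by
  simp only [Sq, Pq, Dq, Fin.sum_univ_six]
  simp [Qc, Qs, Ac, Fin.sum_univ_three]
  ring

set_option maxHeartbeats 4000000 in
lemma SqB123 (a b : Fin 3 → ℝ) (α β : ℝ) (z : V6) : Sq a b α β z 1 2 3 = 0 := by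
  simp only [Sq, Pq, Dq, Fin.sum_univ_six]
  simp [Qc, Qs, Ac, Fin.sum_univ_three]
  ring

set_option maxHeartbeats 4000000 in
lemma SqB124 (a b : Fin 3 → ℝ) (α β : ℝ) (z : V6) : Sq a b α β z 1 2 4 = 0 := by
  simp only [Sq, Pq, Dq, Fin.sum_univ_six]
  simp [Qc, Qs, Ac, Fin.sum_univ_three]
  ring

set_option maxHeartbeats 4000000 in
lemma SqB125 (a b : Fin 3 → ℝ) (α β : ℝ) (z : V6) : Sq a b α β z 1 2 5 = 0 := by
  simp only [Sq, Pq, Dq, Fin.sum_univ_six]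
  simp [Qc, Qs, Ac, Fin.sum_univ_three]
  ring

set_option maxHeartbeats 4000000 in
lemma SqB134 (a b : Fin 3 → ℝ) (α β : ℝ) (z : V6) : Sq a b α β z 1 3 4 = 0 := by
  simp only [Sq, Pq, Dq, Fin.sum_univ_six]
  simp [Qc, Qs, Ac, Fin.sum_univ_three]
  ring

set_option maxHeartbeats 4000000 in
lemma SqB135 (a b : Fin 3 → ℝ) (α β : ℝ) (z : V6) : Sq a b α β z 1 3 5 = 0 := by
  simp only [Sq, Pq, Dq, Fin.sum_univ_six]
  simp [Qc, Qs, Ac, Fin.sum_univ_three]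
  ring

set_option maxHeartbeats 4000000 in
lemma SqB145 (a b : Fin 3 → ℝ) (α β : ℝ) (z : V6) : Sq a b α β z 1 4 5 = 0 := by
  simp only [Sq, Pq, Dq, Fin.sum_univ_six]
  simp [Qc, Qs, Ac, Fin.sum_univ_three]
  ring

set_option maxHeartbeats 4000000 in
lemma SqB234 (a b : Fin 3 → ℝ) (α β : ℝ) (z : V6) : Sq a b α β z 2 3 4 = 0 := by
  simp only [Sq, Pq, Dq, Fin.sum_univ_six]
  simp [Qc, Qs, Ac, Fin.sum_univ_three]
  ring

set_option maxHeartbeats 4000000 in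
lemma SqB235 (a b : Fin 3 → ℝ) (α β : ℝ) (z : V6) : Sq a b α β z 2 3 5 = 0 := by
  simp only [Sq, Pq, Dq, Fin.sum_univ_six]
  simp [Qc, Qs, Ac, Fin.sum_univ_three]
  ring

set_option maxHeartbeats 4000000 in
lemma SqB245 (a b : Fin 3 → ℝ) (α β : ℝ) (z : V6) : Sq a b α β z 2 4 5 = 0 := by
  simp only [Sq, Pq, Dq, Fin.sum_univ_six]
  simp [Qc, Qs, Ac, Fin.sum_univ_three]
  ring

set_option maxHeartbeats 4000000 in
lemma SqB345 (a b : Fin 3 → ℝ) (α β : ℝ) (z : V6) : Sq a b α β z 3 4 5 = 0 := by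
  simp only [Sq, Pq, Dq, Fin.sum_univ_six]
  simp [Qc, Qs, Ac, Fin.sum_univ_three]
  ring


lemma Sq_zero (a b : Fin 3 → ℝ) (α β : ℝ) (z : V6) (i j k : Fin 6) :
    Sq a b α β z i j k = 0 := by
  fin_cases i <;> fin_cases j <;> fin_cases k
  · exact (CharZero.eq_neg_self_iff.mp (Sq_swap a b α β z 0 0 0))
  · exact (CharZero.eq_neg_self_iff.mp (Sq_swap a b α β z 0 0 1))
  · exact (CharZero.eq_neg_self_iff.mp (Sq_swap a b α β z 0 0 2))
  · exact (CharZero.eq_neg_self_iff.mp (Sq_swap a b α β z 0 0 3))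
  · exact (CharZero.eq_neg_self_iff.mp (Sq_swap a b α β z 0 0 4))
  · exact (CharZero.eq_neg_self_iff.mp (Sq_swap a b α β z 0 0 5))
  · exact ((Sq_cyc a b α β z 0 1 0).trans ((Sq_cyc a b α β z 1 0 0).trans (CharZero.eq_neg_self_iff.mp (Sq_swap a b α β z 0 0 1))))
  · exact ((Sq_cyc a b α β z 0 1 1).trans (CharZero.eq_neg_self_iff.mp (Sq_swap a b α β z 1 1 0)))
  · exact (SqB012 a b α β z)
  · exact (SqB013 a b α β z)
  · exact (SqB014 a b α β z)
  · exact (SqB015 a b α β z)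
  · exact ((Sq_cyc a b α β z 0 2 0).trans ((Sq_cyc a b α β z 2 0 0).trans (CharZero.eq_neg_self_iff.mp (Sq_swap a b α β z 0 0 2))))
  · exact ((Sq_swap a b α β z 0 2 1).trans (neg_eq_zero.mpr ((Sq_cyc a b α β z 2 0 1).trans (SqB012 a b α β z))))
  · exact ((Sq_cyc a b α β z 0 2 2).trans (CharZero.eq_neg_self_iff.mp (Sq_swap a b α β z 2 2 0)))
  · exact (SqB023 a b α β z)
  · exact (SqB024 a b α β z)
  · exact (SqB025 a b α β z)
  · exact ((Sq_cyc a b α β z 0 3 0).trans ((Sq_cyc a b α β z 3 0 0).trans (CharZero.eq_neg_self_iff.mp (Sq_swap a b α β z 0 0 3))))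
  · exact ((Sq_swap a b α β z 0 3 1).trans (neg_eq_zero.mpr ((Sq_cyc a b α β z 3 0 1).trans (SqB013 a b α β z))))
  · exact ((Sq_swap a b α β z 0 3 2).trans (neg_eq_zero.mpr ((Sq_cyc a b α β z 3 0 2).trans (SqB023 a b α β z))))
  · exact ((Sq_cyc a b α β z 0 3 3).trans (CharZero.eq_neg_self_iff.mp (Sq_swap a b α β z 3 3 0)))
  · exact (SqB034 a b α β z)
  · exact (SqB035 a b α β z)
  · exact ((Sq_cyc a b α β z 0 4 0).trans ((Sq_cyc a b α β z 4 0 0).trans (CharZero.eq_neg_self_iff.mp (Sq_swap a b α β z 0 0 4))))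
  · exact ((Sq_swap a b α β z 0 4 1).trans (neg_eq_zero.mpr ((Sq_cyc a b α β z 4 0 1).trans (SqB014 a b α β z))))
  · exact ((Sq_swap a b α β z 0 4 2).trans (neg_eq_zero.mpr ((Sq_cyc a b α β z 4 0 2).trans (SqB024 a b α β z))))
  · exact ((Sq_swap a b α β z 0 4 3).trans (neg_eq_zero.mpr ((Sq_cyc a b α β z 4 0 3).trans (SqB034 a b α β z))))
  · exact ((Sq_cyc a b α β z 0 4 4).trans (CharZero.eq_neg_self_iff.mp (Sq_swap a b α β z 4 4 0)))
  · exact (SqB045 a b α β z)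
  · exact ((Sq_cyc a b α β z 0 5 0).trans ((Sq_cyc a b α β z 5 0 0).trans (CharZero.eq_neg_self_iff.mp (Sq_swap a b α β z 0 0 5))))
  · exact ((Sq_swap a b α β z 0 5 1).trans (neg_eq_zero.mpr ((Sq_cyc a b α β z 5 0 1).trans (SqB015 a b α β z))))
  · exact ((Sq_swap a b α β z 0 5 2).trans (neg_eq_zero.mpr ((Sq_cyc a b α β z 5 0 2).trans (SqB025 a b α β z))))
  · exact ((Sq_swap a b α β z 0 5 3).trans (neg_eq_zero.mpr ((Sq_cyc a b α β z 5 0 3).trans (SqB035 a b α β z))))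
  · exact ((Sq_swap a b α β z 0 5 4).trans (neg_eq_zero.mpr ((Sq_cyc a b α β z 5 0 4).trans (SqB045 a b α β z))))
  · exact ((Sq_cyc a b α β z 0 5 5).trans (CharZero.eq_neg_self_iff.mp (Sq_swap a b α β z 5 5 0)))
  · exact ((Sq_cyc a b α β z 1 0 0).trans (CharZero.eq_neg_self_iff.mp (Sq_swap a b α β z 0 0 1)))
  · exact ((Sq_cyc a b α β z 1 0 1).trans ((Sq_cyc a b α β z 0 1 1).trans (CharZero.eq_neg_self_iff.mp (Sq_swap a b α β z 1 1 0))))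
  · exact ((Sq_swap a b α β z 1 0 2).trans (neg_eq_zero.mpr (SqB012 a b α β z)))
  · exact ((Sq_swap a b α β z 1 0 3).trans (neg_eq_zero.mpr (SqB013 a b α β z)))
  · exact ((Sq_swap a b α β z 1 0 4).trans (neg_eq_zero.mpr (SqB014 a b α β z)))
  · exact ((Sq_swap a b α β z 1 0 5).trans (neg_eq_zero.mpr (SqB015 a b α β z)))
  · exact (CharZero.eq_neg_self_iff.mp (Sq_swap a b α β z 1 1 0))
  · exact (CharZero.eq_neg_self_iff.mp (Sq_swap a b α β z 1 1 1))
  · exact (CharZero.eq_neg_self_iff.mp (Sq_swap a b α β z 1 1 2))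
  · exact (CharZero.eq_neg_self_iff.mp (Sq_swap a b α β z 1 1 3))
  · exact (CharZero.eq_neg_self_iff.mp (Sq_swap a b α β z 1 1 4))
  · exact (CharZero.eq_neg_self_iff.mp (Sq_swap a b α β z 1 1 5))
  · exact ((Sq_cyc a b α β z 1 2 0).trans ((Sq_cyc a b α β z 2 0 1).trans (SqB012 a b α β z)))
  · exact ((Sq_cyc a b α β z 1 2 1).trans ((Sq_cyc a b α β z 2 1 1).trans (CharZero.eq_neg_self_iff.mp (Sq_swap a b α β z 1 1 2))))
  · exact ((Sq_cyc a b α β z 1 2 2).trans (CharZero.eq_neg_self_iff.mp (Sq_swap a b α β z 2 2 1)))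
  · exact (SqB123 a b α β z)
  · exact (SqB124 a b α β z)
  · exact (SqB125 a b α β z)
  · exact ((Sq_cyc a b α β z 1 3 0).trans ((Sq_cyc a b α β z 3 0 1).trans (SqB013 a b α β z)))
  · exact ((Sq_cyc a b α β z 1 3 1).trans ((Sq_cyc a b α β z 3 1 1).trans (CharZero.eq_neg_self_iff.mp (Sq_swap a b α β z 1 1 3))))
  · exact ((Sq_swap a b α β z 1 3 2).trans (neg_eq_zero.mpr ((Sq_cyc a b α β z 3 1 2).trans (SqB123 a b α β z))))
  · exact ((Sq_cyc a b α β z 1 3 3).trans (CharZero.eq_neg_self_iff.mp (Sq_swap a b α β z 3 3 1)))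
  · exact (SqB134 a b α β z)
  · exact (SqB135 a b α β z)
  · exact ((Sq_cyc a b α β z 1 4 0).trans ((Sq_cyc a b α β z 4 0 1).trans (SqB014 a b α β z)))
  · exact ((Sq_cyc a b α β z 1 4 1).trans ((Sq_cyc a b α β z 4 1 1).trans (CharZero.eq_neg_self_iff.mp (Sq_swap a b α β z 1 1 4))))
  · exact ((Sq_swap a b α β z 1 4 2).trans (neg_eq_zero.mpr ((Sq_cyc a b α β z 4 1 2).trans (SqB124 a b α β z))))
  · exact ((Sq_swap a b α β z 1 4 3).trans (neg_eq_zero.mpr ((Sq_cyc a b α β z 4 1 3).trans (SqB134 a b α β z))))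
  · exact ((Sq_cyc a b α β z 1 4 4).trans (CharZero.eq_neg_self_iff.mp (Sq_swap a b α β z 4 4 1)))
  · exact (SqB145 a b α β z)
  · exact ((Sq_cyc a b α β z 1 5 0).trans ((Sq_cyc a b α β z 5 0 1).trans (SqB015 a b α β z)))
  · exact ((Sq_cyc a b α β z 1 5 1).trans ((Sq_cyc a b α β z 5 1 1).trans (CharZero.eq_neg_self_iff.mp (Sq_swap a b α β z 1 1 5))))
  · exact ((Sq_swap a b α β z 1 5 2).trans (neg_eq_zero.mpr ((Sq_cyc a b α β z 5 1 2).trans (SqB125 a b α β z))))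
  · exact ((Sq_swap a b α β z 1 5 3).trans (neg_eq_zero.mpr ((Sq_cyc a b α β z 5 1 3).trans (SqB135 a b α β z))))
  · exact ((Sq_swap a b α β z 1 5 4).trans (neg_eq_zero.mpr ((Sq_cyc a b α β z 5 1 4).trans (SqB145 a b α β z))))
  · exact ((Sq_cyc a b α β z 1 5 5).trans (CharZero.eq_neg_self_iff.mp (Sq_swap a b α β z 5 5 1)))
  · exact ((Sq_cyc a b α β z 2 0 0).trans (CharZero.eq_neg_self_iff.mp (Sq_swap a b α β z 0 0 2)))
  · exact ((Sq_cyc a b α β z 2 0 1).trans (SqB012 a b α β z))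
  · exact ((Sq_cyc a b α β z 2 0 2).trans ((Sq_cyc a b α β z 0 2 2).trans (CharZero.eq_neg_self_iff.mp (Sq_swap a b α β z 2 2 0))))
  · exact ((Sq_swap a b α β z 2 0 3).trans (neg_eq_zero.mpr (SqB023 a b α β z)))
  · exact ((Sq_swap a b α β z 2 0 4).trans (neg_eq_zero.mpr (SqB024 a b α β z)))
  · exact ((Sq_swap a b α β z 2 0 5).trans (neg_eq_zero.mpr (SqB025 a b α β z)))
  · exact ((Sq_swap a b α β z 2 1 0).trans (neg_eq_zero.mpr ((Sq_cyc a b α β z 1 2 0).trans ((Sq_cyc a b α β z 2 0 1).trans (SqB012 a b α β z)))))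
  · exact ((Sq_cyc a b α β z 2 1 1).trans (CharZero.eq_neg_self_iff.mp (Sq_swap a b α β z 1 1 2)))
  · exact ((Sq_cyc a b α β z 2 1 2).trans ((Sq_cyc a b α β z 1 2 2).trans (CharZero.eq_neg_self_iff.mp (Sq_swap a b α β z 2 2 1))))
  · exact ((Sq_swap a b α β z 2 1 3).trans (neg_eq_zero.mpr (SqB123 a b α β z)))
  · exact ((Sq_swap a b α β z 2 1 4).trans (neg_eq_zero.mpr (SqB124 a b α β z)))
  · exact ((Sq_swap a b α β z 2 1 5).trans (neg_eq_zero.mpr (SqB125 a b α β z)))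
  · exact (CharZero.eq_neg_self_iff.mp (Sq_swap a b α β z 2 2 0))
  · exact (CharZero.eq_neg_self_iff.mp (Sq_swap a b α β z 2 2 1))
  · exact (CharZero.eq_neg_self_iff.mp (Sq_swap a b α β z 2 2 2))
  · exact (CharZero.eq_neg_self_iff.mp (Sq_swap a b α β z 2 2 3))
  · exact (CharZero.eq_neg_self_iff.mp (Sq_swap a b α β z 2 2 4))
  · exact (CharZero.eq_neg_self_iff.mp (Sq_swap a b α β z 2 2 5))
  · exact ((Sq_cyc a b α β z 2 3 0).trans ((Sq_cyc a b α β z 3 0 2).trans (SqB023 a b α β z)))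
  · exact ((Sq_cyc a b α β z 2 3 1).trans ((Sq_cyc a b α β z 3 1 2).trans (SqB123 a b α β z)))
  · exact ((Sq_cyc a b α β z 2 3 2).trans ((Sq_cyc a b α β z 3 2 2).trans (CharZero.eq_neg_self_iff.mp (Sq_swap a b α β z 2 2 3))))
  · exact ((Sq_cyc a b α β z 2 3 3).trans (CharZero.eq_neg_self_iff.mp (Sq_swap a b α β z 3 3 2)))
  · exact (SqB234 a b α β z)
  · exact (SqB235 a b α β z)
  · exact ((Sq_cyc a b α β z 2 4 0).trans ((Sq_cyc a b α β z 4 0 2).trans (SqB024 a b α β z)))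
  · exact ((Sq_cyc a b α β z 2 4 1).trans ((Sq_cyc a b α β z 4 1 2).trans (SqB124 a b α β z)))
  · exact ((Sq_cyc a b α β z 2 4 2).trans ((Sq_cyc a b α β z 4 2 2).trans (CharZero.eq_neg_self_iff.mp (Sq_swap a b α β z 2 2 4))))
  · exact ((Sq_swap a b α β z 2 4 3).trans (neg_eq_zero.mpr ((Sq_cyc a b α β z 4 2 3).trans (SqB234 a b α β z))))
  · exact ((Sq_cyc a b α β z 2 4 4).trans (CharZero.eq_neg_self_iff.mp (Sq_swap a b α β z 4 4 2)))
  · exact (SqB245 a b α β z)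
  · exact ((Sq_cyc a b α β z 2 5 0).trans ((Sq_cyc a b α β z 5 0 2).trans (SqB025 a b α β z)))
  · exact ((Sq_cyc a b α β z 2 5 1).trans ((Sq_cyc a b α β z 5 1 2).trans (SqB125 a b α β z)))
  · exact ((Sq_cyc a b α β z 2 5 2).trans ((Sq_cyc a b α β z 5 2 2).trans (CharZero.eq_neg_self_iff.mp (Sq_swap a b α β z 2 2 5))))
  · exact ((Sq_swap a b α β z 2 5 3).trans (neg_eq_zero.mpr ((Sq_cyc a b α β z 5 2 3).trans (SqB235 a b α β z))))
  · exact ((Sq_swap a b α β z 2 5 4).trans (neg_eq_zero.mpr ((Sq_cyc a b α β z 5 2 4).trans (SqB245 a b α β z))))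
  · exact ((Sq_cyc a b α β z 2 5 5).trans (CharZero.eq_neg_self_iff.mp (Sq_swap a b α β z 5 5 2)))
  · exact ((Sq_cyc a b α β z 3 0 0).trans (CharZero.eq_neg_self_iff.mp (Sq_swap a b α β z 0 0 3)))
  · exact ((Sq_cyc a b α β z 3 0 1).trans (SqB013 a b α β z))
  · exact ((Sq_cyc a b α β z 3 0 2).trans (SqB023 a b α β z))
  · exact ((Sq_cyc a b α β z 3 0 3).trans ((Sq_cyc a b α β z 0 3 3).trans (CharZero.eq_neg_self_iff.mp (Sq_swap a b α β z 3 3 0))))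
  · exact ((Sq_swap a b α β z 3 0 4).trans (neg_eq_zero.mpr (SqB034 a b α β z)))
  · exact ((Sq_swap a b α β z 3 0 5).trans (neg_eq_zero.mpr (SqB035 a b α β z)))
  · exact ((Sq_swap a b α β z 3 1 0).trans (neg_eq_zero.mpr ((Sq_cyc a b α β z 1 3 0).trans ((Sq_cyc a b α β z 3 0 1).trans (SqB013 a b α β z)))))
  · exact ((Sq_cyc a b α β z 3 1 1).trans (CharZero.eq_neg_self_iff.mp (Sq_swap a b α β z 1 1 3)))
  · exact ((Sq_cyc a b α β z 3 1 2).trans (SqB123 a b α β z))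
  · exact ((Sq_cyc a b α β z 3 1 3).trans ((Sq_cyc a b α β z 1 3 3).trans (CharZero.eq_neg_self_iff.mp (Sq_swap a b α β z 3 3 1))))
  · exact ((Sq_swap a b α β z 3 1 4).trans (neg_eq_zero.mpr (SqB134 a b α β z)))
  · exact ((Sq_swap a b α β z 3 1 5).trans (neg_eq_zero.mpr (SqB135 a b α β z)))
  · exact ((Sq_swap a b α β z 3 2 0).trans (neg_eq_zero.mpr ((Sq_cyc a b α β z 2 3 0).trans ((Sq_cyc a b α β z 3 0 2).trans (SqB023 a b α β z)))))
  · exact ((Sq_swap a b α β z 3 2 1).trans (neg_eq_zero.mpr ((Sq_cyc a b α β z 2 3 1).trans ((Sq_cyc a b α β z 3 1 2).trans (SqB123 a b α β z)))))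
  · exact ((Sq_cyc a b α β z 3 2 2).trans (CharZero.eq_neg_self_iff.mp (Sq_swap a b α β z 2 2 3)))
  · exact ((Sq_cyc a b α β z 3 2 3).trans ((Sq_cyc a b α β z 2 3 3).trans (CharZero.eq_neg_self_iff.mp (Sq_swap a b α β z 3 3 2))))
  · exact ((Sq_swap a b α β z 3 2 4).trans (neg_eq_zero.mpr (SqB234 a b α β z)))
  · exact ((Sq_swap a b α β z 3 2 5).trans (neg_eq_zero.mpr (SqB235 a b α β z)))
  · exact (CharZero.eq_neg_self_iff.mp (Sq_swap a b α β z 3 3 0))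
  · exact (CharZero.eq_neg_self_iff.mp (Sq_swap a b α β z 3 3 1))
  · exact (CharZero.eq_neg_self_iff.mp (Sq_swap a b α β z 3 3 2))
  · exact (CharZero.eq_neg_self_iff.mp (Sq_swap a b α β z 3 3 3))
  · exact (CharZero.eq_neg_self_iff.mp (Sq_swap a b α β z 3 3 4))
  · exact (CharZero.eq_neg_self_iff.mp (Sq_swap a b α β z 3 3 5))
  · exact ((Sq_cyc a b α β z 3 4 0).trans ((Sq_cyc a b α β z 4 0 3).trans (SqB034 a b α β z)))
  · exact ((Sq_cyc a b α β z 3 4 1).trans ((Sq_cyc a b α β z 4 1 3).trans (SqB134 a b α β z)))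
  · exact ((Sq_cyc a b α β z 3 4 2).trans ((Sq_cyc a b α β z 4 2 3).trans (SqB234 a b α β z)))
  · exact ((Sq_cyc a b α β z 3 4 3).trans ((Sq_cyc a b α β z 4 3 3).trans (CharZero.eq_neg_self_iff.mp (Sq_swap a b α β z 3 3 4))))
  · exact ((Sq_cyc a b α β z 3 4 4).trans (CharZero.eq_neg_self_iff.mp (Sq_swap a b α β z 4 4 3)))
  · exact (SqB345 a b α β z)
  · exact ((Sq_cyc a b α β z 3 5 0).trans ((Sq_cyc a b α β z 5 0 3).trans (SqB035 a b α β z)))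
  · exact ((Sq_cyc a b α β z 3 5 1).trans ((Sq_cyc a b α β z 5 1 3).trans (SqB135 a b α β z)))
  · exact ((Sq_cyc a b α β z 3 5 2).trans ((Sq_cyc a b α β z 5 2 3).trans (SqB235 a b α β z)))
  · exact ((Sq_cyc a b α β z 3 5 3).trans ((Sq_cyc a b α β z 5 3 3).trans (CharZero.eq_neg_self_iff.mp (Sq_swap a b α β z 3 3 5))))
  · exact ((Sq_swap a b α β z 3 5 4).trans (neg_eq_zero.mpr ((Sq_cyc a b α β z 5 3 4).trans (SqB345 a b α β z))))
  · exact ((Sq_cyc a b α β z 3 5 5).trans (CharZero.eq_neg_self_iff.mp (Sq_swap a b α β z 5 5 3)))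
  · exact ((Sq_cyc a b α β z 4 0 0).trans (CharZero.eq_neg_self_iff.mp (Sq_swap a b α β z 0 0 4)))
  · exact ((Sq_cyc a b α β z 4 0 1).trans (SqB014 a b α β z))
  · exact ((Sq_cyc a b α β z 4 0 2).trans (SqB024 a b α β z))
  · exact ((Sq_cyc a b α β z 4 0 3).trans (SqB034 a b α β z))
  · exact ((Sq_cyc a b α β z 4 0 4).trans ((Sq_cyc a b α β z 0 4 4).trans (CharZero.eq_neg_self_iff.mp (Sq_swap a b α β z 4 4 0))))
  · exact ((Sq_swap a b α β z 4 0 5).trans (neg_eq_zero.mpr (SqB045 a b α β z)))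
  · exact ((Sq_swap a b α β z 4 1 0).trans (neg_eq_zero.mpr ((Sq_cyc a b α β z 1 4 0).trans ((Sq_cyc a b α β z 4 0 1).trans (SqB014 a b α β z)))))
  · exact ((Sq_cyc a b α β z 4 1 1).trans (CharZero.eq_neg_self_iff.mp (Sq_swap a b α β z 1 1 4)))
  · exact ((Sq_cyc a b α β z 4 1 2).trans (SqB124 a b α β z))
  · exact ((Sq_cyc a b α β z 4 1 3).trans (SqB134 a b α β z))
  · exact ((Sq_cyc a b α β z 4 1 4).trans ((Sq_cyc a b α β z 1 4 4).trans (CharZero.eq_neg_self_iff.mp (Sq_swap a b α β z 4 4 1))))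
  · exact ((Sq_swap a b α β z 4 1 5).trans (neg_eq_zero.mpr (SqB145 a b α β z)))
  · exact ((Sq_swap a b α β z 4 2 0).trans (neg_eq_zero.mpr ((Sq_cyc a b α β z 2 4 0).trans ((Sq_cyc a b α β z 4 0 2).trans (SqB024 a b α β z)))))
  · exact ((Sq_swap a b α β z 4 2 1).trans (neg_eq_zero.mpr ((Sq_cyc a b α β z 2 4 1).trans ((Sq_cyc a b α β z 4 1 2).trans (SqB124 a b α β z)))))
  · exact ((Sq_cyc a b α β z 4 2 2).trans (CharZero.eq_neg_self_iff.mp (Sq_swap a b α β z 2 2 4)))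
  · exact ((Sq_cyc a b α β z 4 2 3).trans (SqB234 a b α β z))
  · exact ((Sq_cyc a b α β z 4 2 4).trans ((Sq_cyc a b α β z 2 4 4).trans (CharZero.eq_neg_self_iff.mp (Sq_swap a b α β z 4 4 2))))
  · exact ((Sq_swap a b α β z 4 2 5).trans (neg_eq_zero.mpr (SqB245 a b α β z)))
  · exact ((Sq_swap a b α β z 4 3 0).trans (neg_eq_zero.mpr ((Sq_cyc a b α β z 3 4 0).trans ((Sq_cyc a b α β z 4 0 3).trans (SqB034 a b α β z)))))
  · exact ((Sq_swap a b α β z 4 3 1).trans (neg_eq_zero.mpr ((Sq_cyc a b α β z 3 4 1).trans ((Sq_cyc a b α β z 4 1 3).trans (SqB134 a b α β z)))))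
  · exact ((Sq_swap a b α β z 4 3 2).trans (neg_eq_zero.mpr ((Sq_cyc a b α β z 3 4 2).trans ((Sq_cyc a b α β z 4 2 3).trans (SqB234 a b α β z)))))
  · exact ((Sq_cyc a b α β z 4 3 3).trans (CharZero.eq_neg_self_iff.mp (Sq_swap a b α β z 3 3 4)))
  · exact ((Sq_cyc a b α β z 4 3 4).trans ((Sq_cyc a b α β z 3 4 4).trans (CharZero.eq_neg_self_iff.mp (Sq_swap a b α β z 4 4 3))))
  · exact ((Sq_swap a b α β z 4 3 5).trans (neg_eq_zero.mpr (SqB345 a b α β z)))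
  · exact (CharZero.eq_neg_self_iff.mp (Sq_swap a b α β z 4 4 0))
  · exact (CharZero.eq_neg_self_iff.mp (Sq_swap a b α β z 4 4 1))
  · exact (CharZero.eq_neg_self_iff.mp (Sq_swap a b α β z 4 4 2))
  · exact (CharZero.eq_neg_self_iff.mp (Sq_swap a b α β z 4 4 3))
  · exact (CharZero.eq_neg_self_iff.mp (Sq_swap a b α β z 4 4 4))
  · exact (CharZero.eq_neg_self_iff.mp (Sq_swap a b α β z 4 4 5))
  · exact ((Sq_cyc a b α β z 4 5 0).trans ((Sq_cyc a b α β z 5 0 4).trans (SqB045 a b α β z)))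
  · exact ((Sq_cyc a b α β z 4 5 1).trans ((Sq_cyc a b α β z 5 1 4).trans (SqB145 a b α β z)))
  · exact ((Sq_cyc a b α β z 4 5 2).trans ((Sq_cyc a b α β z 5 2 4).trans (SqB245 a b α β z)))
  · exact ((Sq_cyc a b α β z 4 5 3).trans ((Sq_cyc a b α β z 5 3 4).trans (SqB345 a b α β z)))
  · exact ((Sq_cyc a b α β z 4 5 4).trans ((Sq_cyc a b α β z 5 4 4).trans (CharZero.eq_neg_self_iff.mp (Sq_swap a b α β z 4 4 5))))
  · exact ((Sq_cyc a b α β z 4 5 5).trans (CharZero.eq_neg_self_iff.mp (Sq_swap a b α β z 5 5 4)))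
  · exact ((Sq_cyc a b α β z 5 0 0).trans (CharZero.eq_neg_self_iff.mp (Sq_swap a b α β z 0 0 5)))
  · exact ((Sq_cyc a b α β z 5 0 1).trans (SqB015 a b α β z))
  · exact ((Sq_cyc a b α β z 5 0 2).trans (SqB025 a b α β z))
  · exact ((Sq_cyc a b α β z 5 0 3).trans (SqB035 a b α β z))
  · exact ((Sq_cyc a b α β z 5 0 4).trans (SqB045 a b α β z))
  · exact ((Sq_cyc a b α β z 5 0 5).trans ((Sq_cyc a b α β z 0 5 5).trans (CharZero.eq_neg_self_iff.mp (Sq_swap a b α β z 5 5 0))))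
  · exact ((Sq_swap a b α β z 5 1 0).trans (neg_eq_zero.mpr ((Sq_cyc a b α β z 1 5 0).trans ((Sq_cyc a b α β z 5 0 1).trans (SqB015 a b α β z)))))
  · exact ((Sq_cyc a b α β z 5 1 1).trans (CharZero.eq_neg_self_iff.mp (Sq_swap a b α β z 1 1 5)))
  · exact ((Sq_cyc a b α β z 5 1 2).trans (SqB125 a b α β z))
  · exact ((Sq_cyc a b α β z 5 1 3).trans (SqB135 a b α β z))
  · exact ((Sq_cyc a b α β z 5 1 4).trans (SqB145 a b α β z))
  · exact ((Sq_cyc a b α β z 5 1 5).trans ((Sq_cyc a b α β z 1 5 5).trans (CharZero.eq_neg_self_iff.mp (Sq_swap a b α β z 5 5 1))))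
  · exact ((Sq_swap a b α β z 5 2 0).trans (neg_eq_zero.mpr ((Sq_cyc a b α β z 2 5 0).trans ((Sq_cyc a b α β z 5 0 2).trans (SqB025 a b α β z)))))
  · exact ((Sq_swap a b α β z 5 2 1).trans (neg_eq_zero.mpr ((Sq_cyc a b α β z 2 5 1).trans ((Sq_cyc a b α β z 5 1 2).trans (SqB125 a b α β z)))))
  · exact ((Sq_cyc a b α β z 5 2 2).trans (CharZero.eq_neg_self_iff.mp (Sq_swap a b α β z 2 2 5)))
  · exact ((Sq_cyc a b α β z 5 2 3).trans (SqB235 a b α β z))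
  · exact ((Sq_cyc a b α β z 5 2 4).trans (SqB245 a b α β z))
  · exact ((Sq_cyc a b α β z 5 2 5).trans ((Sq_cyc a b α β z 2 5 5).trans (CharZero.eq_neg_self_iff.mp (Sq_swap a b α β z 5 5 2))))
  · exact ((Sq_swap a b α β z 5 3 0).trans (neg_eq_zero.mpr ((Sq_cyc a b α β z 3 5 0).trans ((Sq_cyc a b α β z 5 0 3).trans (SqB035 a b α β z)))))
  · exact ((Sq_swap a b α β z 5 3 1).trans (neg_eq_zero.mpr ((Sq_cyc a b α β z 3 5 1).trans ((Sq_cyc a b α β z 5 1 3).trans (SqB135 a b α β z)))))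
  · exact ((Sq_swap a b α β z 5 3 2).trans (neg_eq_zero.mpr ((Sq_cyc a b α β z 3 5 2).trans ((Sq_cyc a b α β z 5 2 3).trans (SqB235 a b α β z)))))
  · exact ((Sq_cyc a b α β z 5 3 3).trans (CharZero.eq_neg_self_iff.mp (Sq_swap a b α β z 3 3 5)))
  · exact ((Sq_cyc a b α β z 5 3 4).trans (SqB345 a b α β z))
  · exact ((Sq_cyc a b α β z 5 3 5).trans ((Sq_cyc a b α β z 3 5 5).trans (CharZero.eq_neg_self_iff.mp (Sq_swap a b α β z 5 5 3))))
  · exact ((Sq_swap a b α β z 5 4 0).trans (neg_eq_zero.mpr ((Sq_cyc a b α β z 4 5 0).trans ((Sq_cyc a b α β z 5 0 4).trans (SqB045 a b α β z)))))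
  · exact ((Sq_swap a b α β z 5 4 1).trans (neg_eq_zero.mpr ((Sq_cyc a b α β z 4 5 1).trans ((Sq_cyc a b α β z 5 1 4).trans (SqB145 a b α β z)))))
  · exact ((Sq_swap a b α β z 5 4 2).trans (neg_eq_zero.mpr ((Sq_cyc a b α β z 4 5 2).trans ((Sq_cyc a b α β z 5 2 4).trans (SqB245 a b α β z)))))
  · exact ((Sq_swap a b α β z 5 4 3).trans (neg_eq_zero.mpr ((Sq_cyc a b α β z 4 5 3).trans ((Sq_cyc a b α β z 5 3 4).trans (SqB345 a b α β z)))))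
  · exact ((Sq_cyc a b α β z 5 4 4).trans (CharZero.eq_neg_self_iff.mp (Sq_swap a b α β z 4 4 5)))
  · exact ((Sq_cyc a b α β z 5 4 5).trans ((Sq_cyc a b α β z 4 5 5).trans (CharZero.eq_neg_self_iff.mp (Sq_swap a b α β z 5 5 4))))
  · exact (CharZero.eq_neg_self_iff.mp (Sq_swap a b α β z 5 5 0))
  · exact (CharZero.eq_neg_self_iff.mp (Sq_swap a b α β z 5 5 1))
  · exact (CharZero.eq_neg_self_iff.mp (Sq_swap a b α β z 5 5 2))
  · exact (CharZero.eq_neg_self_iff.mp (Sq_swap a b α β z 5 5 3))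
  · exact (CharZero.eq_neg_self_iff.mp (Sq_swap a b α β z 5 5 4))
  · exact (CharZero.eq_neg_self_iff.mp (Sq_swap a b α β z 5 5 5))


lemma pd_sum (F : Fin 6 → V6 → ℝ) (l : Fin 6) (z : V6)
    (hF : ∀ i, DifferentiableAt ℝ (F i) z) :
    pd l (fun z => ∑ i, F i z) z = ∑ i, pd l (F i) z := by
  unfold pd
  rw [fderiv_fun_sum (fun i _ => hF i)]
  simp

lemma pd_mul (f g : V6 → ℝ) (l : Fin 6) (z : V6)
    (hf : DifferentiableAt ℝ f z) (hg : DifferentiableAt ℝ g z) :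
    pd l (fun z => f z * g z) z = pd l f z * g z + f z * pd l g z := by
  unfold pd
  rw [fderiv_fun_mul hf hg]
  simp [smul_eq_mul]
  ring

lemma pd_const (c : ℝ) (l : Fin 6) (z : V6) : pd l (fun _ => c) z = 0 := by
  unfold pd; simp

lemma diff_coord (m : Fin 6) : Differentiable ℝ (fun z : V6 => z m) :=
  (ContinuousLinearMap.proj (R := ℝ) (φ := fun _ : Fin 6 => ℝ) m).differentiable

lemma pd_proj (l m : Fin 6) (z : V6) :
    pd l (fun z : V6 => z m) z = if m = l then 1 else 0 := by
  unfold pd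
  have h : fderiv ℝ (fun z : V6 => z m) z
      = ContinuousLinearMap.proj (R := ℝ) (φ := fun _ : Fin 6 => ℝ) m :=
    (ContinuousLinearMap.proj (R := ℝ) (φ := fun _ : Fin 6 => ℝ) m).fderiv
  rw [h]
  simp [Pi.single_apply]

lemma pd_quad (c : Fin 6 → Fin 6 → ℝ) (l : Fin 6) (z : V6) :
    pd l (fun z => ∑ m, ∑ n, c m n * z m * z n) z = ∑ n, (c l n + c n l) * z n := by
  rw [pd_sum _ _ _ (fun m => by
    refine DifferentiableAt.fun_sum fun n _ => ?_
    exact (((diff_coord m).const_mul (c m n)).mul (diff_coord n)).differentiableAt)]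
  have step : ∀ m, pd l (fun z => ∑ n, c m n * z m * z n) z
      = ∑ n, ((if m = l then 1 else 0) * c m n * z n + c m n * z m * (if n = l then 1 else 0)) := by
    intro m
    rw [pd_sum _ _ _ (fun n => (((diff_coord m).const_mul (c m n)).fun_mul (diff_coord n)).differentiableAt)]
    refine Finset.sum_congr rfl fun n _ => ?_
    rw [pd_mul (fun z => c m n * z m) (fun z => z n) l z
      ((diff_coord m).const_mul (c m n)).differentiableAt (diff_coord n).differentiableAt]
    rw [pd_mul (fun _ => c m n) (fun z => z m) l z (differentiableAt_const _) (diff_coord m).differentiableAt]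
    rw [pd_proj, pd_proj, pd_const]
    ring
  simp only [step]
  have e1 : (∑ x : Fin 6, ∑ n : Fin 6, (if x = l then 1 else 0) * c x n * z n)
      = ∑ n, c l n * z n := by
    rw [Finset.sum_comm]
    simp [ite_mul, zero_mul, one_mul, Finset.sum_ite_eq', Finset.mem_univ]
  have e2 : (∑ x : Fin 6, ∑ n : Fin 6, c x n * z x * (if n = l then 1 else 0))
      = ∑ x, c x l * z x := by
    simp [mul_ite, mul_zero, mul_one, Finset.sum_ite_eq', Finset.mem_univ]
  simp only [Finset.sum_add_distrib]
  rw [e1, e2, ← Finset.sum_add_distrib]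
  exact Finset.sum_congr rfl fun n _ => by ring

lemma contDiff_pd (g : V6 → ℝ) (hg : ContDiff ℝ (⊤ : ℕ∞) g) (i : Fin 6) :
    ContDiff ℝ (⊤ : ℕ∞) (fun z => pd i g z) := by
  unfold pd
  exact (hg.fderiv_right (by simp)).clm_apply contDiff_const

lemma pd_comm (g : V6 → ℝ) (hg : ContDiff ℝ (⊤ : ℕ∞) g) (i j : Fin 6) (z : V6) :
    pd i (fun z => pd j g z) z = pd j (fun z => pd i g z) z := by
  have hd : Differentiable ℝ (fderiv ℝ g) := (hg.fderiv_right (m := (⊤ : ℕ∞)) (by simp)).differentiable (by simp)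
  have key : ∀ v w : V6, fderiv ℝ (fun z => fderiv ℝ g z v) z w
      = fderiv ℝ (fderiv ℝ g) z w v := by
    intro v w
    rw [fderiv_clm_apply (hd z) (differentiableAt_const v)]
    simp
  unfold pd
  rw [key, key]
  exact second_derivative_symmetric (fun y => (hg.differentiable (by simp) y).hasFDerivAt)
    ((hd z).hasFDerivAt) _ _

lemma pd_pb (P : V6 → Matrix (Fin 6) (Fin 6) ℝ)
    (hP : ∀ i j, ContDiff ℝ (⊤ : ℕ∞) (fun z => P z i j))
    (g h : V6 → ℝ) (hg : ContDiff ℝ (⊤ : ℕ∞) g) (hh : ContDiff ℝ (⊤ : ℕ∞) h) (l : Fin 6) (z : V6) :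
    pd l (fun z => ∑ i, ∑ j, P z i j * pd i g z * pd j h z) z
      = ∑ i, ∑ j, (pd l (fun z => P z i j) z * pd i g z * pd j h z
        + P z i j * pd l (fun z => pd i g z) z * pd j h z
        + P z i j * pd i g z * pd l (fun z => pd j h z) z) := by
  have hPd : ∀ i j, DifferentiableAt ℝ (fun z => P z i j) z :=
    fun i j => ((hP i j).differentiable (by simp)).differentiableAt
  have hgd : ∀ i, DifferentiableAt ℝ (fun z => pd i g z) z :=
    fun i => ((contDiff_pd g hg i).differentiable (by simp)).differentiableAt
  have hhd : ∀ j, DifferentiableAt ℝ (fun z => pd j h z) z :=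
    fun j => ((contDiff_pd h hh j).differentiable (by simp)).differentiableAt
  rw [pd_sum _ _ _ (fun i => by
    refine DifferentiableAt.fun_sum fun j _ => ?_
    exact ((hPd i j).mul (hgd i)).mul (hhd j))]
  refine Finset.sum_congr rfl fun i _ => ?_
  rw [pd_sum _ _ _ (fun j => ((hPd i j).fun_mul (hgd i)).fun_mul (hhd j))]
  refine Finset.sum_congr rfl fun j _ => ?_
  rw [pd_mul _ _ _ _ ((hPd i j).fun_mul (hgd i)) (hhd j),
    pd_mul _ _ _ _ (hPd i j) (hgd i)]
  ring

set_option linter.unusedVariables false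

abbrev I4 := Fin 6 × Fin 6 × Fin 6 × Fin 6

lemma sum4 (B : Fin 6 → Fin 6 → Fin 6 → Fin 6 → ℝ) :
    (∑ x : I4, B x.1 x.2.1 x.2.2.1 x.2.2.2) = ∑ k, ∑ l, ∑ i, ∑ j, B k l i j := by
  simp [Fintype.sum_prod_type]

def ea : I4 ≃ I4 :=
  ⟨fun x => (x.2.2.1, x.2.1, x.2.2.2, x.1), fun x => (x.2.2.2, x.2.1, x.1, x.2.2.1),
   fun x => rfl, fun x => rfl⟩
def eb : I4 ≃ I4 :=
  ⟨fun x => (x.2.2.1, x.2.2.2, x.2.1, x.1), fun x => (x.2.2.2, x.2.2.1, x.1, x.2.1),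
   fun x => rfl, fun x => rfl⟩
def ec : I4 ≃ I4 :=
  ⟨fun x => (x.2.2.2, x.2.1, x.1, x.2.2.1), fun x => (x.2.2.1, x.2.1, x.2.2.2, x.1),
   fun x => rfl, fun x => rfl⟩
def ed : I4 ≃ I4 :=
  ⟨fun x => (x.2.2.2, x.2.2.1, x.1, x.2.1), fun x => (x.2.2.1, x.2.2.2, x.2.1, x.1),
   fun x => rfl, fun x => rfl⟩
def et : I4 ≃ I4 :=
  ⟨fun x => (x.1, x.2.2.2, x.2.1, x.2.2.1), fun x => (x.1, x.2.2.1, x.2.2.2, x.2.1),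
   fun x => rfl, fun x => rfl⟩

lemma core (q : Fin 6 → Fin 6 → ℝ) (d : Fin 6 → Fin 6 → Fin 6 → ℝ)
    (F G H : Fin 6 → ℝ) (Hf Hg Hh : Fin 6 → Fin 6 → ℝ)
    (hq : ∀ i j, q i j = - q j i)
    (hHf : ∀ i j, Hf i j = Hf j i) (hHg : ∀ i j, Hg i j = Hg j i)
    (hHh : ∀ i j, Hh i j = Hh j i)
    (hS : ∀ i j k, (∑ l, (q i l * d l j k + q j l * d l k i + q k l * d l i j)) = 0) :
    (∑ k, ∑ l, q k l * F k *
      (∑ i, ∑ j, (d l i j * G i * H j + q i j * Hg l i * H j + q i j * G i * Hh l j)))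
    + (∑ k, ∑ l, q k l * G k *
      (∑ i, ∑ j, (d l i j * H i * F j + q i j * Hh l i * F j + q i j * H i * Hf l j)))
    + (∑ k, ∑ l, q k l * H k *
      (∑ i, ∑ j, (d l i j * F i * G j + q i j * Hf l i * G j + q i j * F i * Hg l j))) = 0 := by
  -- name the nine integrands
  set A1 : I4 → ℝ := fun x => q x.1 x.2.1 * F x.1 * (d x.2.1 x.2.2.1 x.2.2.2 * G x.2.2.1 * H x.2.2.2) with hA1
  set C1 : I4 → ℝ := fun x => q x.1 x.2.1 * F x.1 * (q x.2.2.1 x.2.2.2 * Hg x.2.1 x.2.2.1 * H x.2.2.2) with hC1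
  set D1 : I4 → ℝ := fun x => q x.1 x.2.1 * F x.1 * (q x.2.2.1 x.2.2.2 * G x.2.2.1 * Hh x.2.1 x.2.2.2) with hD1
  set A2 : I4 → ℝ := fun x => q x.1 x.2.1 * G x.1 * (d x.2.1 x.2.2.1 x.2.2.2 * H x.2.2.1 * F x.2.2.2) with hA2
  set C2 : I4 → ℝ := fun x => q x.1 x.2.1 * G x.1 * (q x.2.2.1 x.2.2.2 * Hh x.2.1 x.2.2.1 * F x.2.2.2) with hC2
  set D2 : I4 → ℝ := fun x => q x.1 x.2.1 * G x.1 * (q x.2.2.1 x.2.2.2 * H x.2.2.1 * Hf x.2.1 x.2.2.2) with hD2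
  set A3 : I4 → ℝ := fun x => q x.1 x.2.1 * H x.1 * (d x.2.1 x.2.2.1 x.2.2.2 * F x.2.2.1 * G x.2.2.2) with hA3
  set C3 : I4 → ℝ := fun x => q x.1 x.2.1 * H x.1 * (q x.2.2.1 x.2.2.2 * Hf x.2.1 x.2.2.1 * G x.2.2.2) with hC3
  set D3 : I4 → ℝ := fun x => q x.1 x.2.1 * H x.1 * (q x.2.2.1 x.2.2.2 * F x.2.2.1 * Hg x.2.1 x.2.2.2) with hD3
  have h1 : (∑ k, ∑ l, q k l * F k *
      (∑ i, ∑ j, (d l i j * G i * H j + q i j * Hg l i * H j + q i j * G i * Hh l j)))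
      = ∑ x : I4, (A1 x + C1 x + D1 x) := by
    rw [sum4 (fun k l i j => A1 (k,l,i,j) + C1 (k,l,i,j) + D1 (k,l,i,j))]
    simp only [Finset.mul_sum]
    refine Finset.sum_congr rfl fun k _ => Finset.sum_congr rfl fun l _ =>
      Finset.sum_congr rfl fun i _ => Finset.sum_congr rfl fun j _ => ?_
    simp only [hA1, hC1, hD1]
    ring
  have h2 : (∑ k, ∑ l, q k l * G k *
      (∑ i, ∑ j, (d l i j * H i * F j + q i j * Hh l i * F j + q i j * H i * Hf l j)))
      = ∑ x : I4, (A2 x + C2 x + D2 x) := by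
    rw [sum4 (fun k l i j => A2 (k,l,i,j) + C2 (k,l,i,j) + D2 (k,l,i,j))]
    simp only [Finset.mul_sum]
    refine Finset.sum_congr rfl fun k _ => Finset.sum_congr rfl fun l _ =>
      Finset.sum_congr rfl fun i _ => Finset.sum_congr rfl fun j _ => ?_
    simp only [hA2, hC2, hD2]
    ring
  have h3 : (∑ k, ∑ l, q k l * H k *
      (∑ i, ∑ j, (d l i j * F i * G j + q i j * Hf l i * G j + q i j * F i * Hg l j)))
      = ∑ x : I4, (A3 x + C3 x + D3 x) := by
    rw [sum4 (fun k l i j => A3 (k,l,i,j) + C3 (k,l,i,j) + D3 (k,l,i,j))]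
    simp only [Finset.mul_sum]
    refine Finset.sum_congr rfl fun k _ => Finset.sum_congr rfl fun l _ =>
      Finset.sum_congr rfl fun i _ => Finset.sum_congr rfl fun j _ => ?_
    simp only [hA3, hC3, hD3]
    ring
  rw [h1, h2, h3]
  have r2 : (∑ x : I4, (A2 x + C2 x + D2 x))
      = ∑ x : I4, (A2 (ea x) + C2 (eb x) + D2 x) := by
    rw [Finset.sum_add_distrib, Finset.sum_add_distrib,
        Finset.sum_add_distrib, Finset.sum_add_distrib,
        ← Equiv.sum_comp ea (fun x => A2 x), ← Equiv.sum_comp eb (fun x => C2 x)]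
  have r3 : (∑ x : I4, (A3 x + C3 x + D3 x))
      = ∑ x : I4, (A3 (ec x) + C3 (eb x) + D3 (ed x)) := by
    rw [Finset.sum_add_distrib, Finset.sum_add_distrib,
        Finset.sum_add_distrib, Finset.sum_add_distrib,
        ← Equiv.sum_comp ec (fun x => A3 x), ← Equiv.sum_comp eb (fun x => C3 x),
        ← Equiv.sum_comp ed (fun x => D3 x)]
  rw [r2, r3, ← Finset.sum_add_distrib, ← Finset.sum_add_distrib]
  set E : I4 → ℝ := fun x =>
    (q x.1 x.2.1 * d x.2.1 x.2.2.1 x.2.2.2 + q x.2.2.1 x.2.1 * d x.2.1 x.2.2.2 x.1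
      + q x.2.2.2 x.2.1 * d x.2.1 x.1 x.2.2.1) * (F x.1 * G x.2.2.1 * H x.2.2.2) with hE
  have hpoint : (∑ x : I4, (A1 x + C1 x + D1 x + (A2 (ea x) + C2 (eb x) + D2 x)
      + (A3 (ec x) + C3 (eb x) + D3 (ed x)))) = ∑ x : I4, E x := by
    refine Finset.sum_congr rfl fun x _ => ?_
    obtain ⟨k, l, i, j⟩ := x
    simp only [hA1, hC1, hD1, hA2, hC2, hD2, hA3, hC3, hD3, hE, ea, eb, ec, ed,
      Equiv.coe_fn_mk]
    linear_combination (Hg l i * q k l * F k * H j) * hq j i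
      + (q j i * q k l * F k * H j) * hHg i l
      + (q i j * G i * F k * Hh l j) * hq l k
      + (q i j * G i * F k * q l k) * hHh j l
      + (q i j * H i * G k * Hf l j) * hq l k
      + (q i j * H i * G k * q l k) * hHf j l
  rw [hpoint, ← Equiv.sum_comp et (fun x => E x)]
  simp only [et, Equiv.coe_fn_mk]
  rw [sum4 (fun a b c d => E (a, d, b, c))]
  refine Finset.sum_eq_zero fun k _ => Finset.sum_eq_zero fun i _ =>
    Finset.sum_eq_zero fun j _ => ?_
  have : ∀ l : Fin 6, E (k, l, i, j)
      = (q k l * d l i j + q i l * d l j k + q j l * d l k i) * (F k * G i * H j) := by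
    intro l; simp only [hE]
  simp only [et, Equiv.coe_fn_mk, this]
  rw [← Finset.sum_mul, hS k i j, zero_mul]


lemma P11_cd (a b : Fin 3 → ℝ) (α β : ℝ) (i j : Fin 6) :
    ContDiff ℝ (⊤ : ℕ∞) (fun z => P11 a b α β z i j) := by
  have e : (fun z => P11 a b α β z i j)
      = fun z : V6 => ∑ m, ∑ n, Qc a b α β i j m n * z m * z n :=
    funext fun z => P11_eq a b α β z i j
  rw [e]
  refine ContDiff.sum fun m _ => ContDiff.sum fun n _ => ?_
  exact (contDiff_const.mul
      (ContinuousLinearMap.proj (R := ℝ) (φ := fun _ : Fin 6 => ℝ) m).contDiff).mul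
    (ContinuousLinearMap.proj (R := ℝ) (φ := fun _ : Fin 6 => ℝ) n).contDiff

lemma pd_P11 (a b : Fin 3 → ℝ) (α β : ℝ) (l i j : Fin 6) (z : V6) :
    pd l (fun z => P11 a b α β z i j) z
      = ∑ n, (Qc a b α β i j l n + Qc a b α β i j n l) * z n := by
  have e : (fun z => P11 a b α β z i j)
      = fun z : V6 => ∑ m, ∑ n, Qc a b α β i j m n * z m * z n :=
    funext fun z => P11_eq a b α β z i j
  rw [e, pd_quad]

lemma pd_pb' (P : V6 → Matrix (Fin 6) (Fin 6) ℝ)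
    (hP : ∀ i j, ContDiff ℝ (⊤ : ℕ∞) (fun z => P z i j))
    (g h : V6 → ℝ) (hg : ContDiff ℝ (⊤ : ℕ∞) g) (hh : ContDiff ℝ (⊤ : ℕ∞) h) (l : Fin 6) (z : V6) :
    pd l (pb P g h) z
      = ∑ i, ∑ j, (pd l (fun z => P z i j) z * pd i g z * pd j h z
        + P z i j * pd l (fun z => pd i g z) z * pd j h z
        + P z i j * pd i g z * pd l (fun z => pd j h z) z) :=
  pd_pb P hP g h hg hh l z

/-- the bracket defined by `P₁⁽¹⁾` satisfies the Jacobi identity. -/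
theorem jacobi_P11 (a b : Fin 3 → ℝ) (α β : ℝ)
    (f g h : V6 → ℝ) (hf : ContDiff ℝ (⊤ : ℕ∞) f) (hg : ContDiff ℝ (⊤ : ℕ∞) g)
    (hh : ContDiff ℝ (⊤ : ℕ∞) h) (z : V6) :
    pb (P11 a b α β) f (pb (P11 a b α β) g h) z +
    pb (P11 a b α β) g (pb (P11 a b α β) h f) z +
    pb (P11 a b α β) h (pb (P11 a b α β) f g) z = 0 := by
  have hPcd : ∀ i j, ContDiff ℝ (⊤ : ℕ∞) (fun z => P11 a b α β z i j) := P11_cd a b α β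
  have hq : ∀ i j : Fin 6, P11 a b α β z i j = - P11 a b α β z j i := by
    intro i j
    rw [P11_eq, P11_eq]
    exact Pq_anti a b α β z i j
  have hS : ∀ i j k : Fin 6,
      (∑ l, (P11 a b α β z i l * pd l (fun z => P11 a b α β z j k) z
        + P11 a b α β z j l * pd l (fun z => P11 a b α β z k i) z
        + P11 a b α β z k l * pd l (fun z => P11 a b α β z i j) z)) = 0 := by
    intro i j k
    have e := Sq_zero a b α β z i j k
    unfold Sq Pq Dq at e
    simp only [pd_P11]
    simp only [P11_eq]
    exact e
  show (∑ i, ∑ j, P11 a b α β z i j * pd i f z * pd j (pb (P11 a b α β) g h) z)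
    + (∑ i, ∑ j, P11 a b α β z i j * pd i g z * pd j (pb (P11 a b α β) h f) z)
    + (∑ i, ∑ j, P11 a b α β z i j * pd i h z * pd j (pb (P11 a b α β) f g) z) = 0
  simp only [pd_pb' (P11 a b α β) hPcd g h hg hh,
    pd_pb' (P11 a b α β) hPcd h f hh hf,
    pd_pb' (P11 a b α β) hPcd f g hf hg]
  exact core (fun i j => P11 a b α β z i j)
    (fun l i j => pd l (fun z => P11 a b α β z i j) z)
    (fun i => pd i f z) (fun i => pd i g z) (fun i => pd i h z)
    (fun l i => pd l (fun z => pd i f z) z)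
    (fun l i => pd l (fun z => pd i g z) z)
    (fun l i => pd l (fun z => pd i h z) z)
    hq (fun l i => pd_comm f hf l i z) (fun l i => pd_comm g hg l i z)
    (fun l i => pd_comm h hh l i z) hS
end
end

section
/- The quadratic bivector P_1^{(1)} (with blocks 2α⟨a,s⟩ s_M, β(a×s)⊗(b×t), −β[(a×s)⊗(b×t)]^T, 2α⟨b,t⟩ t_M) annihilates both Casimirs of the canonical structure: {|s|^2, f}_1 = {|t|^2, f}_1 = 0 for all smooth functions f; equivalently P_1^{(1)} d(|s|^2) = P_1^{(1)} d(|t|^2) = 0. -/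
noncomputable section

theorem pd_three (m₀ m₁ m₂ i : Fin 6) (z : V6) :
    pd i (fun w => w m₀ * w m₀ + w m₁ * w m₁ + w m₂ * w m₂) z =
      (if m₀ = i then 2 * z m₀ else 0) + (if m₁ = i then 2 * z m₁ else 0) +
        (if m₂ = i then 2 * z m₂ else 0) := by
  have hq : ∀ m : Fin 6, HasFDerivAt (fun w : V6 => w m * w m)
      ((ContinuousLinearMap.proj (R := ℝ) (φ := fun _ : Fin 6 => ℝ) m) z •
          ContinuousLinearMap.proj (R := ℝ) (φ := fun _ : Fin 6 => ℝ) m +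
        (ContinuousLinearMap.proj (R := ℝ) (φ := fun _ : Fin 6 => ℝ) m) z •
          ContinuousLinearMap.proj (R := ℝ) (φ := fun _ : Fin 6 => ℝ) m) z := by
    intro m
    set L := ContinuousLinearMap.proj (R := ℝ) (φ := fun _ : Fin 6 => ℝ) m with hL
    exact L.hasFDerivAt.mul L.hasFDerivAt
  have h := ((hq m₀).add (hq m₁)).add (hq m₂)
  rw [pd, show (fun w : V6 => w m₀ * w m₀ + w m₁ * w m₁ + w m₂ * w m₂) =
      ((fun w : V6 => w m₀ * w m₀) + (fun w : V6 => w m₁ * w m₁)) + (fun w : V6 => w m₂ * w m₂)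
      from rfl, h.fderiv]
  simp [Pi.single_apply]
  split <;> split <;> split <;> ring

set_option maxHeartbeats 4000000 in
/-- `P₁⁽¹⁾` annihilates both Casimirs `|s|²`, `|t|²` of the canonical structure. -/
theorem P11_casimirs (a b : Fin 3 → ℝ) (α β : ℝ)
    (f : V6 → ℝ) (hf : ContDiff ℝ (⊤ : ℕ∞) f) (z : V6) :
    pb (P11 a b α β) (fun w => dot (sv w) (sv w)) f z = 0 ∧
    pb (P11 a b α β) (fun w => dot (tv w) (tv w)) f z = 0 := by
  have hs : (fun w : V6 => dot (sv w) (sv w)) =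
      fun w : V6 => w 0 * w 0 + w 1 * w 1 + w 2 * w 2 := by
    funext w; simp [dot, sv, Fin.sum_univ_three]
  have ht : (fun w : V6 => dot (tv w) (tv w)) =
      fun w : V6 => w 3 * w 3 + w 4 * w 4 + w 5 * w 5 := by
    funext w; simp [dot, tv, Fin.sum_univ_three]
  have e0 : (finSumFinEquiv (m := 3) (n := 3)).symm (0 : Fin 6) = Sum.inl 0 := by decide
  have e1 : (finSumFinEquiv (m := 3) (n := 3)).symm (1 : Fin 6) = Sum.inl 1 := by decide
  have e2 : (finSumFinEquiv (m := 3) (n := 3)).symm (2 : Fin 6) = Sum.inl 2 := by decide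
  have e3 : (finSumFinEquiv (m := 3) (n := 3)).symm (3 : Fin 6) = Sum.inr 0 := by decide
  have e4 : (finSumFinEquiv (m := 3) (n := 3)).symm (4 : Fin 6) = Sum.inr 1 := by decide
  have e5 : (finSumFinEquiv (m := 3) (n := 3)).symm (5 : Fin 6) = Sum.inr 2 := by decide
  have c0 : Fin.castAdd 3 (0 : Fin 3) = (0 : Fin 6) := rfl
  have c1 : Fin.castAdd 3 (1 : Fin 3) = (1 : Fin 6) := rfl
  have c2 : Fin.castAdd 3 (2 : Fin 3) = (2 : Fin 6) := rfl
  have n0 : Fin.natAdd 3 (0 : Fin 3) = (3 : Fin 6) := rfl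
  have n1 : Fin.natAdd 3 (1 : Fin 3) = (4 : Fin 6) := rfl
  have n2 : Fin.natAdd 3 (2 : Fin 3) = (5 : Fin 6) := rfl
  constructor
  · rw [pb, hs]
    simp only [Fin.sum_univ_six, pd_three, P11, bb, Matrix.submatrix_apply, e0, e1, e2, e3, e4,
      e5, Matrix.fromBlocks_apply₁₁, Matrix.fromBlocks_apply₁₂, Matrix.fromBlocks_apply₂₁,
      Matrix.fromBlocks_apply₂₂, Matrix.smul_apply, Matrix.neg_apply, Matrix.transpose_apply,
      cm, outer, cross, sv, tv, dot, Fin.sum_univ_three, c0, c1, c2, n0, n1, n2,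
      Matrix.of_apply, Matrix.cons_val', Matrix.cons_val_zero, Matrix.cons_val_one,
      Matrix.head_cons, Matrix.empty_val', Matrix.cons_val_fin_one, Matrix.head_fin_const,
      Matrix.cons_val_two, Matrix.tail_cons, smul_eq_mul, Fin.reduceEq, reduceIte]
    ring
  · rw [pb, ht]
    simp only [Fin.sum_univ_six, pd_three, P11, bb, Matrix.submatrix_apply, e0, e1, e2, e3, e4,
      e5, Matrix.fromBlocks_apply₁₁, Matrix.fromBlocks_apply₁₂, Matrix.fromBlocks_apply₂₁,
      Matrix.fromBlocks_apply₂₂, Matrix.smul_apply, Matrix.neg_apply, Matrix.transpose_apply,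
      cm, outer, cross, sv, tv, dot, Fin.sum_univ_three, c0, c1, c2, n0, n1, n2,
      Matrix.of_apply, Matrix.cons_val', Matrix.cons_val_zero, Matrix.cons_val_one,
      Matrix.head_cons, Matrix.empty_val', Matrix.cons_val_fin_one, Matrix.head_fin_const,
      Matrix.cons_val_two, Matrix.tail_cons, smul_eq_mul, Fin.reduceEq, reduceIte]
    ring
end
end
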